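/- arXiv:1407.5229 — 4 statements merged into one kernel-verified Lean document; each statement's English description precedes it below -/
import Mathlib

section
/- Let U ⊂ ℝ² be open and A : U → ℝ² be C¹ with curl A = ∂₁A₂ − ∂₂A₁ = 0 on U. Let γ₀, γ₁ : [0,1] → U be C¹ closed curves (γ_i(0) = γ_i(1)) that are smoothly homotopic through closed curves in U, i.e., there is a C¹ map H : [0,1] × [0,1] → U with H(0,·) = γ₀, H(1,·) = γ₁, and H(s,0) = H(s,1) for all s. Then the circulations agree: ∫₀¹ A(γ₀(t))·γ₀'(t) dt = ∫₀¹ A(γ₁(t))·γ₁'(t) dt. In particular, when curl A = 0 outside the obstacles, the magnetic flux ∮_γ A·dx depends only on the homotopy class of γ in U. -/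
open Real Set MeasureTheory intervalIntegral

noncomputable section

/-- The dot product on `ℝ²`. -/
def dot2 (a b : ℝ × ℝ) : ℝ := a.1 * b.1 + a.2 * b.2

/-- First spatial partial derivative of a real-valued function on `ℝ²`. -/
def pdR1 (f : ℝ × ℝ → ℝ) (x : ℝ × ℝ) : ℝ := deriv (fun s => f (s, x.2)) x.1

/-- Second spatial partial derivative of a real-valued function on `ℝ²`. -/
def pdR2 (f : ℝ × ℝ → ℝ) (x : ℝ × ℝ) : ℝ := deriv (fun s => f (x.1, s)) x.2

open Filter Topology Metric
open scoped Interval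

/-!
A curl-free field is locally exact: on a square `ball c r ⊆ U` (sup metric), Green's theorem
says that the integrals of `A` along the two corner paths from `c` to `y` agree, and their common
value is a potential of `A`. Along a `C¹` curve inside the square the circulation is therefore a
difference of potential values, so the circulation around the image of each small rectangle of
the homotopy vanishes. With a Lebesgue number for the cover of `[0,1]²` by preimages of such
squares, the circulation of `H s ·` minus that of `H s' ·` is the circulation around the image of
`[s, s'] × [0, 1]`, whose sides `t = 0` and `t = 1` cancel because the curves are closed. Hence
`s ↦ ∮ H s` is locally constant on the connected interval `[0, 1]`.
-/

lemma IsPreconnected.apply_eq_of_forall_dist_lt {X α : Type*} [PseudoMetricSpace X] {s : Set X}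
    (hs : IsPreconnected s) {f : X → α} {δ : ℝ} (hδ : 0 < δ)
    (h : ∀ x ∈ s, ∀ y ∈ s, dist x y < δ → f x = f y) {x y : X} (hx : x ∈ s) (hy : y ∈ s) :
    f x = f y := by
  refine hs.induction₂ (fun x y => f x = f y) (fun x hx => ?_) (fun _ _ _ _ _ _ => Eq.trans)
    (fun _ _ _ _ => Eq.symm) hx hy
  filter_upwards [self_mem_nhdsWithin, nhdsWithin_le_nhds (ball_mem_nhds x hδ)] with y hy hxy
  exact h x hx y hy (mem_ball'.1 hxy)

def dotCLM (a : ℝ × ℝ) : ℝ × ℝ →L[ℝ] ℝ :=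
  a.1 • ContinuousLinearMap.fst ℝ ℝ ℝ + a.2 • ContinuousLinearMap.snd ℝ ℝ ℝ

@[simp] lemma dotCLM_apply (a w : ℝ × ℝ) : dotCLM a w = dot2 a w := by
  simp [dotCLM, dot2]

lemma pdR1_eq_fderiv {f : ℝ × ℝ → ℝ} {x : ℝ × ℝ} (hf : DifferentiableAt ℝ f x) :
    pdR1 f x = fderiv ℝ f x (1, 0) :=
  (hf.hasFDerivAt.comp_hasDerivAt x.1 ((hasDerivAt_id _).prodMk (hasDerivAt_const _ _))).deriv

lemma pdR2_eq_fderiv {f : ℝ × ℝ → ℝ} {x : ℝ × ℝ} (hf : DifferentiableAt ℝ f x) :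
    pdR2 f x = fderiv ℝ f x (0, 1) :=
  (hf.hasFDerivAt.comp_hasDerivAt x.2 ((hasDerivAt_const _ _).prodMk (hasDerivAt_id _))).deriv

lemma hasDerivAt_integral_of_continuousOn {f : ℝ → ℝ} {s : Set ℝ} (hs : IsOpen s)
    (hf : ContinuousOn f s) {a b : ℝ} (hab : [[a, b]] ⊆ s) :
    HasDerivAt (fun x => ∫ t in a..x, f t) (f b) b :=
  integral_hasDerivAt_right ((hf.mono hab).intervalIntegrable)
    (hf.stronglyMeasurableAtFilter hs b (hab right_mem_uIcc))
    (hf.continuousAt (hs.mem_nhds (hab right_mem_uIcc)))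

lemma uIcc_subset_ball {c x r : ℝ} (hx : x ∈ ball c r) : [[c, x]] ⊆ ball c r :=
  (convex_ball c r).ordConnected.uIcc_subset (mem_ball_self (pos_of_mem_ball hx)) hx

lemma uIcc_prod_uIcc_subset_ball {c y : ℝ × ℝ} {r : ℝ} (hy : y ∈ ball c r) :
    [[c.1, y.1]] ×ˢ [[c.2, y.2]] ⊆ ball c r := by
  rw [← ball_prod_same] at hy ⊢
  exact prod_mono (uIcc_subset_ball hy.1) (uIcc_subset_ball hy.2)

def cornerPotential (A : ℝ × ℝ → ℝ × ℝ) (c y : ℝ × ℝ) : ℝ :=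
  (∫ u in c.1..y.1, (A (u, c.2)).1) + ∫ v in c.2..y.2, (A (y.1, v)).2

section CurlFree

variable {U : Set (ℝ × ℝ)} {A : ℝ × ℝ → ℝ × ℝ}

theorem integral_right_add_integral_up_eq (hU : IsOpen U) (hA : DifferentiableOn ℝ A U)
    (hcurl : ∀ x ∈ U, pdR1 (fun y => (A y).2) x = pdR2 (fun y => (A y).1) x)
    {a₁ b₁ a₂ b₂ : ℝ} (hR : [[a₁, b₁]] ×ˢ [[a₂, b₂]] ⊆ U) :
    (∫ u in a₁..b₁, (A (u, a₂)).1) + (∫ v in a₂..b₂, (A (b₁, v)).2)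
      = (∫ v in a₂..b₂, (A (a₁, v)).2) + ∫ u in a₁..b₁, (A (u, b₂)).1 := by
  have hdiff : ∀ x ∈ U, DifferentiableAt ℝ A x := fun x hx =>
    hA.differentiableAt (hU.mem_nhds hx)
  set f' := fun x => fderiv ℝ (fun y => (A y).2) x
  set g' := fun x => -fderiv ℝ (fun y => (A y).1) x
  have hdiv : EqOn (fun x => f' x (1, 0) + g' x (0, 1)) 0 ([[a₁, b₁]] ×ˢ [[a₂, b₂]]) := by
    intro x hx
    have hAx := hdiff x (hR hx)
    simp only [f', g', neg_apply, Pi.zero_apply,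
      ← pdR1_eq_fderiv hAx.snd, ← pdR2_eq_fderiv hAx.fst, hcurl x (hR hx), add_neg_cancel]
  have hinterior : Ioo (min a₁ b₁) (max a₁ b₁) ×ˢ Ioo (min a₂ b₂) (max a₂ b₂) \ ∅ ⊆ U :=
    fun x hx => hR ⟨Ioo_subset_Icc_self hx.1.1, Ioo_subset_Icc_self hx.1.2⟩
  have hgreen := integral2_divergence_prod_of_hasFDerivAt_off_countable
    (fun x => (A x).2) (fun x => -(A x).1) f' g' a₁ a₂ b₁ b₂ ∅ countable_empty
    (continuous_snd.comp_continuousOn (hA.continuousOn.mono hR))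
    (continuous_fst.comp_continuousOn (hA.continuousOn.mono hR)).neg
    (fun x hx => (hdiff x (hinterior hx)).snd.hasFDerivAt)
    (fun x hx => (hdiff x (hinterior hx)).fst.hasFDerivAt.neg)
    (integrableOn_zero.congr_fun hdiv.symm (measurableSet_uIcc.prod measurableSet_uIcc))
  have hzero : (∫ x in a₁..b₁, ∫ y in a₂..b₂, f' (x, y) (1, 0) + g' (x, y) (0, 1)) = 0 := by
    refine (integral_congr fun x hx => ?_).trans integral_zero
    exact (integral_congr fun y hy => hdiv ⟨hx, hy⟩).trans integral_zero
  simp only [hzero, intervalIntegral.integral_neg] at hgreen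
  linarith

lemma cornerPotential_eq_integral_up_add_integral_right (hU : IsOpen U)
    (hA : DifferentiableOn ℝ A U)
    (hcurl : ∀ x ∈ U, pdR1 (fun y => (A y).2) x = pdR2 (fun y => (A y).1) x)
    {c : ℝ × ℝ} {r : ℝ} (hball : ball c r ⊆ U) {y : ℝ × ℝ} (hy : y ∈ ball c r) :
    cornerPotential A c y
      = (∫ v in c.2..y.2, (A (c.1, v)).2) + ∫ u in c.1..y.1, (A (u, y.2)).1 :=
  integral_right_add_integral_up_eq hU hA hcurl
    ((uIcc_prod_uIcc_subset_ball hy).trans hball)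

lemma hasDerivAt_cornerPotential_snd (hA : ContinuousOn A U) {c : ℝ × ℝ} {r : ℝ}
    (hball : ball c r ⊆ U) {y : ℝ × ℝ} (hy : y ∈ ball c r) :
    HasDerivAt (fun v => cornerPotential A c (y.1, v)) (A y).2 y.2 := by
  rw [← ball_prod_same] at hball hy
  have hslice : ContinuousOn (fun v => (A (y.1, v)).2) (ball c.2 r) :=
    continuous_snd.comp_continuousOn (hA.comp (Continuous.prodMk_right y.1).continuousOn
      fun v hv => hball ⟨hy.1, hv⟩)
  exact (hasDerivAt_integral_of_continuousOn isOpen_ball hslice (uIcc_subset_ball hy.2)).const_add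
    (∫ u in c.1..y.1, (A (u, c.2)).1)

lemma hasDerivAt_cornerPotential_fst (hU : IsOpen U) (hA : DifferentiableOn ℝ A U)
    (hcurl : ∀ x ∈ U, pdR1 (fun y => (A y).2) x = pdR2 (fun y => (A y).1) x)
    {c : ℝ × ℝ} {r : ℝ} (hball : ball c r ⊆ U) {y : ℝ × ℝ} (hy : y ∈ ball c r) :
    HasDerivAt (fun u => cornerPotential A c (u, y.2)) (A y).1 y.1 := by
  have hswap : ∀ᶠ u in 𝓝 y.1, cornerPotential A c (u, y.2)
      = (∫ v in c.2..y.2, (A (c.1, v)).2) + ∫ u' in c.1..u, (A (u', y.2)).1 := by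
    rw [← ball_prod_same] at hy
    filter_upwards [isOpen_ball.mem_nhds hy.1] with u hu
    exact cornerPotential_eq_integral_up_add_integral_right hU hA hcurl hball
      (ball_prod_same c.1 c.2 r ▸ ⟨hu, hy.2⟩)
  rw [← ball_prod_same] at hball hy
  have hslice : ContinuousOn (fun u => (A (u, y.2)).1) (ball c.1 r) :=
    continuous_fst.comp_continuousOn (hA.continuousOn.comp
      (Continuous.prodMk_left y.2).continuousOn fun u hu => hball ⟨hu, hy.2⟩)
  exact ((hasDerivAt_integral_of_continuousOn isOpen_ball hslice
    (uIcc_subset_ball hy.1)).const_add _).congr_of_eventuallyEq hswap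

theorem hasFDerivAt_cornerPotential (hU : IsOpen U) (hA : DifferentiableOn ℝ A U)
    (hcurl : ∀ x ∈ U, pdR1 (fun y => (A y).2) x = pdR2 (fun y => (A y).1) x)
    {c : ℝ × ℝ} {r : ℝ} (hball : ball c r ⊆ U) {y : ℝ × ℝ} (hy : y ∈ ball c r) :
    HasFDerivAt (cornerPotential A c) (dotCLM (A y)) y := by
  have hAy : ContinuousAt A y := hA.continuousOn.continuousAt (hU.mem_nhds (hball hy))
  have hstrict := hasStrictFDerivAt_uncurry_coprod (u := y)
    (f := fun u v => cornerPotential A c (u, v))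
    (f₁ := fun u v => ContinuousLinearMap.toSpanSingleton ℝ (A (u, v)).1)
    (f₂ := fun u v => ContinuousLinearMap.toSpanSingleton ℝ (A (u, v)).2)
    (Filter.eventually_of_mem (isOpen_ball.mem_nhds hy) fun z hz =>
      (hasDerivAt_cornerPotential_fst hU hA hcurl hball hz).hasFDerivAt)
    (Filter.eventually_of_mem (isOpen_ball.mem_nhds hy) fun z hz =>
      (hasDerivAt_cornerPotential_snd hA.continuousOn hball hz).hasFDerivAt)
    ((ContinuousLinearMap.toSpanSingletonLIE ℝ ℝ).continuous.continuousAt.comp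
      (continuous_fst.continuousAt.comp hAy))
    ((ContinuousLinearMap.toSpanSingletonLIE ℝ ℝ).continuous.continuousAt.comp
      (continuous_snd.continuousAt.comp hAy))
  refine hstrict.hasFDerivAt.congr_fderiv (ContinuousLinearMap.ext fun w => ?_)
  simp only [ContinuousLinearMap.coprod_apply, dotCLM_apply, dot2, mul_comm (A y).1,
    mul_comm (A y).2]
  rfl

theorem exists_local_potential (hU : IsOpen U) (hA : DifferentiableOn ℝ A U)
    (hcurl : ∀ x ∈ U, pdR1 (fun y => (A y).2) x = pdR2 (fun y => (A y).1) x) :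
    ∀ x ∈ U, ∃ V ∈ 𝓝 x, ∃ φ : ℝ × ℝ → ℝ, ∀ y ∈ V, HasFDerivAt φ (dotCLM (A y)) y := by
  intro x hx
  obtain ⟨r, hr, hball⟩ := Metric.isOpen_iff.1 hU x hx
  exact ⟨ball x r, ball_mem_nhds x hr, cornerPotential A x,
    fun y hy => hasFDerivAt_cornerPotential hU hA hcurl hball hy⟩

end CurlFree

def lineIntegral (A : ℝ × ℝ → ℝ × ℝ) (γ : ℝ → ℝ × ℝ) (a b : ℝ) : ℝ :=
  ∫ t in a..b, dot2 (A (γ t)) (deriv γ t)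

lemma lineIntegral_congr {A : ℝ × ℝ → ℝ × ℝ} {γ γ' : ℝ → ℝ × ℝ} {a b : ℝ}
    (h : EqOn γ γ' [[a, b]]) : lineIntegral A γ a b = lineIntegral A γ' a b := by
  have hIoo : EqOn γ γ' (Ioo (min a b) (max a b)) := h.mono Ioo_subset_Icc_self
  refine integral_congr_ae ?_
  filter_upwards [(countable_singleton (max a b)).ae_notMem volume] with t ht htab
  have htIoo : t ∈ Ioo (min a b) (max a b) := ⟨htab.1, htab.2.lt_of_ne ht⟩
  rw [hIoo htIoo, hIoo.deriv isOpen_Ioo htIoo]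

section Homotopy

variable {U : Set (ℝ × ℝ)} {A : ℝ × ℝ → ℝ × ℝ}

lemma intervalIntegrable_dot2_deriv (hA : ContinuousOn A U) {γ : ℝ → ℝ × ℝ}
    (hγ : ContDiff ℝ 1 γ) {a b : ℝ} (hγU : MapsTo γ [[a, b]] U) :
    IntervalIntegrable (fun t => dot2 (A (γ t)) (deriv γ t)) volume a b := by
  have hAγ : ContinuousOn (fun t => A (γ t)) [[a, b]] := hA.comp hγ.continuous.continuousOn hγU
  have hγ' : Continuous (deriv γ) := hγ.continuous_deriv le_rfl
  exact ((hAγ.fst.mul hγ'.fst.continuousOn).add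
    (hAγ.snd.mul hγ'.snd.continuousOn)).intervalIntegrable

lemma lineIntegral_add_adjacent (hA : ContinuousOn A U) {γ : ℝ → ℝ × ℝ}
    (hγ : ContDiff ℝ 1 γ) {a b c : ℝ} (hab : MapsTo γ [[a, b]] U) (hbc : MapsTo γ [[b, c]] U) :
    lineIntegral A γ a b + lineIntegral A γ b c = lineIntegral A γ a c :=
  integral_add_adjacent_intervals (intervalIntegrable_dot2_deriv hA hγ hab)
    (intervalIntegrable_dot2_deriv hA hγ hbc)

lemma lineIntegral_eq_sub (hA : ContinuousOn A U) {φ : ℝ × ℝ → ℝ} {γ : ℝ → ℝ × ℝ}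
    (hγ : ContDiff ℝ 1 γ) {a b : ℝ} (hγU : MapsTo γ [[a, b]] U)
    (hφ : ∀ t ∈ [[a, b]], HasFDerivAt φ (dotCLM (A (γ t))) (γ t)) :
    lineIntegral A γ a b = φ (γ b) - φ (γ a) := by
  unfold lineIntegral
  refine integral_eq_sub_of_hasDerivAt (f := φ ∘ γ) (fun t ht => ?_)
    (intervalIntegrable_dot2_deriv hA hγ hγU)
  simpa using (hφ t ht).comp_hasDerivAt t ((hγ.differentiable one_ne_zero) t).hasDerivAt

lemma lineIntegral_sub_lineIntegral_eq_of_potential (hA : ContinuousOn A U) {φ : ℝ × ℝ → ℝ}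
    {H : ℝ → ℝ → ℝ × ℝ} (hH : ContDiff ℝ 1 (fun p : ℝ × ℝ => H p.1 p.2)) {s₁ s₂ t₁ t₂ : ℝ}
    (hHU : ∀ s ∈ [[s₁, s₂]], ∀ t ∈ [[t₁, t₂]], H s t ∈ U)
    (hφ : ∀ s ∈ [[s₁, s₂]], ∀ t ∈ [[t₁, t₂]], HasFDerivAt φ (dotCLM (A (H s t))) (H s t)) :
    lineIntegral A (H s₂) t₁ t₂ - lineIntegral A (H s₁) t₁ t₂
      = lineIntegral A (H · t₂) s₁ s₂ - lineIntegral A (H · t₁) s₁ s₂ := by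
  have hHs : ∀ s, ContDiff ℝ 1 (H s) := fun s => hH.comp (contDiff_const.prodMk contDiff_id)
  have hHt : ∀ t, ContDiff ℝ 1 (H · t) := fun t => hH.comp (contDiff_id.prodMk contDiff_const)
  rw [lineIntegral_eq_sub hA (hHs s₂) (hHU _ right_mem_uIcc) (hφ _ right_mem_uIcc),
    lineIntegral_eq_sub hA (hHs s₁) (hHU _ left_mem_uIcc) (hφ _ left_mem_uIcc),
    lineIntegral_eq_sub hA (hHt t₂) (fun s hs => hHU s hs _ right_mem_uIcc)
      (fun s hs => hφ s hs _ right_mem_uIcc),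
    lineIntegral_eq_sub hA (hHt t₁) (fun s hs => hHU s hs _ left_mem_uIcc)
      (fun s hs => hφ s hs _ left_mem_uIcc)]
  ring

lemma exists_pos_forall_potential_comp {X : Type*} [PseudoMetricSpace X]
    (hexact : ∀ x ∈ U, ∃ V ∈ 𝓝 x, ∃ φ : ℝ × ℝ → ℝ, ∀ y ∈ V, HasFDerivAt φ (dotCLM (A y)) y)
    {K : Set X} (hK : IsCompact K) {F : X → ℝ × ℝ} (hF : Continuous F) (hFU : MapsTo F K U) :
    ∃ δ > 0, ∀ p ∈ K, ∃ φ : ℝ × ℝ → ℝ, ∀ q ∈ ball p δ, HasFDerivAt φ (dotCLM (A (F q))) (F q) := by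
  choose! V hV φ hφ using hexact
  obtain ⟨δ, hδ, hcover⟩ := lebesgue_number_lemma_of_metric hK
    (c := fun x : U => F ⁻¹' interior (V x)) (fun x => isOpen_interior.preimage hF)
    (fun p hp => mem_iUnion.2 ⟨⟨F p, hFU hp⟩, mem_interior_iff_mem_nhds.2 (hV _ (hFU hp))⟩)
  refine ⟨δ, hδ, fun p hp => ?_⟩
  obtain ⟨x, hx⟩ := hcover p hp
  exact ⟨φ x, fun q hq => hφ x x.2 (F q) (interior_subset (hx hq))⟩

lemma lineIntegral_eq_of_dist_lt (hA : ContinuousOn A U) {H : ℝ → ℝ → ℝ × ℝ}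
    (hH : ContDiff ℝ 1 (fun p : ℝ × ℝ => H p.1 p.2))
    (hHclosed : ∀ s ∈ Icc (0 : ℝ) 1, H s 0 = H s 1)
    (hHU : ∀ s ∈ Icc (0 : ℝ) 1, ∀ t ∈ Icc (0 : ℝ) 1, H s t ∈ U) {δ : ℝ} (hδ : 0 < δ)
    (hpot : ∀ p ∈ Icc (0 : ℝ) 1 ×ˢ Icc (0 : ℝ) 1, ∃ φ : ℝ × ℝ → ℝ,
      ∀ q ∈ ball p δ, HasFDerivAt φ (dotCLM (A (H q.1 q.2))) (H q.1 q.2))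
    {s s' : ℝ} (hs : s ∈ Icc (0 : ℝ) 1) (hs' : s' ∈ Icc (0 : ℝ) 1) (hss' : dist s s' < δ) :
    lineIntegral A (H s) 0 1 = lineIntegral A (H s') 0 1 := by
  have hcell : ∀ t ∈ Icc (0 : ℝ) 1, ∀ t' ∈ Icc (0 : ℝ) 1, dist t t' < δ →
      lineIntegral A (H s') t t' - lineIntegral A (H s) t t'
        = lineIntegral A (H · t') s s' - lineIntegral A (H · t) s s' := by
    intro t ht t' ht' htt'
    obtain ⟨φ, hφ⟩ := hpot (s, t) ⟨hs, ht⟩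
    refine lineIntegral_sub_lineIntegral_eq_of_potential hA hH
      (fun σ hσ τ hτ => hHU σ (uIcc_subset_Icc hs hs' hσ) τ (uIcc_subset_Icc ht ht' hτ))
      (fun σ hσ τ hτ => hφ (σ, τ) ?_)
    rw [← ball_prod_same]
    exact ⟨mem_ball'.2 ((Real.dist_left_le_of_mem_uIcc hσ).trans_lt hss'),
      mem_ball'.2 ((Real.dist_left_le_of_mem_uIcc hτ).trans_lt htt')⟩
  have hadd : ∀ σ ∈ Icc (0 : ℝ) 1, ∀ t ∈ Icc (0 : ℝ) 1, ∀ t' ∈ Icc (0 : ℝ) 1,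
      lineIntegral A (H σ) 0 t + lineIntegral A (H σ) t t' = lineIntegral A (H σ) 0 t' :=
    fun σ hσ t ht t' ht' =>
      lineIntegral_add_adjacent hA (hH.comp (contDiff_const.prodMk contDiff_id))
      (fun τ hτ => hHU σ hσ τ (uIcc_subset_Icc (left_mem_Icc.2 zero_le_one) ht hτ))
      (fun τ hτ => hHU σ hσ τ (uIcc_subset_Icc ht ht' hτ))
  -- Up to the edge `t = 0`, `Φ t` is the circulation around the image of `∂([s, s'] × [0, t])`.
  set Φ : ℝ → ℝ := fun t =>
    lineIntegral A (H s') 0 t - lineIntegral A (H s) 0 t - lineIntegral A (H · t) s s'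
  have hΦ : Φ 0 = Φ 1 := by
    refine isPreconnected_Icc.apply_eq_of_forall_dist_lt hδ (fun t ht t' ht' htt' => ?_)
      (left_mem_Icc.2 zero_le_one) (right_mem_Icc.2 zero_le_one)
    linarith [hcell t ht t' ht' htt', hadd s hs t ht t' ht', hadd s' hs' t ht t' ht']
  have hclosed : lineIntegral A (H · 0) s s' = lineIntegral A (H · 1) s s' :=
    lineIntegral_congr fun σ hσ => hHclosed σ (uIcc_subset_Icc hs hs' hσ)
  have hzero : ∀ σ, lineIntegral A (H σ) 0 0 = 0 := fun _ => integral_same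
  simp only [Φ, hzero] at hΦ
  linarith

theorem lineIntegral_eq_of_homotopy (hA : ContinuousOn A U)
    (hexact : ∀ x ∈ U, ∃ V ∈ 𝓝 x, ∃ φ : ℝ × ℝ → ℝ, ∀ y ∈ V, HasFDerivAt φ (dotCLM (A y)) y)
    {H : ℝ → ℝ → ℝ × ℝ} (hH : ContDiff ℝ 1 (fun p : ℝ × ℝ => H p.1 p.2))
    (hHclosed : ∀ s ∈ Icc (0 : ℝ) 1, H s 0 = H s 1)
    (hHU : ∀ s ∈ Icc (0 : ℝ) 1, ∀ t ∈ Icc (0 : ℝ) 1, H s t ∈ U) :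
    lineIntegral A (H 0) 0 1 = lineIntegral A (H 1) 0 1 := by
  obtain ⟨δ, hδ, hpot⟩ := exists_pos_forall_potential_comp hexact
    (isCompact_Icc.prod isCompact_Icc) hH.continuous fun p hp => hHU _ hp.1 _ hp.2
  exact isPreconnected_Icc.apply_eq_of_forall_dist_lt hδ
    (fun s hs s' hs' => lineIntegral_eq_of_dist_lt hA hH hHclosed hHU hδ hpot hs hs')
    (left_mem_Icc.2 zero_le_one) (right_mem_Icc.2 zero_le_one)

end Homotopy

theorem circulation_homotopy_invariant_general
    (U : Set (ℝ × ℝ)) (hU : IsOpen U)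
    (A : ℝ × ℝ → ℝ × ℝ) (hA : ContDiffOn ℝ 1 A U)
    (hcurl : ∀ x ∈ U, pdR1 (fun y => (A y).2) x = pdR2 (fun y => (A y).1) x)
    (γ₀ γ₁ : ℝ → ℝ × ℝ)
    (H : ℝ → ℝ → ℝ × ℝ) (hH : ContDiff ℝ 1 (fun p : ℝ × ℝ => H p.1 p.2))
    (hH0 : ∀ t ∈ Set.Icc (0 : ℝ) 1, H 0 t = γ₀ t)
    (hH1 : ∀ t ∈ Set.Icc (0 : ℝ) 1, H 1 t = γ₁ t)
    (hHclosed : ∀ s ∈ Set.Icc (0 : ℝ) 1, H s 0 = H s 1)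
    (hHU : ∀ s ∈ Set.Icc (0 : ℝ) 1, ∀ t ∈ Set.Icc (0 : ℝ) 1, H s t ∈ U) :
    (∫ t in (0 : ℝ)..1, dot2 (A (γ₀ t)) (deriv γ₀ t))
      = ∫ t in (0 : ℝ)..1, dot2 (A (γ₁ t)) (deriv γ₁ t) := by
  rw [← uIcc_of_le zero_le_one] at hH0 hH1
  calc (∫ t in (0 : ℝ)..1, dot2 (A (γ₀ t)) (deriv γ₀ t))
      = lineIntegral A (H 0) 0 1 := (lineIntegral_congr hH0).symm
    _ = lineIntegral A (H 1) 0 1 := lineIntegral_eq_of_homotopy hA.continuousOn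
        (exists_local_potential hU (hA.differentiableOn one_ne_zero) hcurl) hH hHclosed hHU
    _ = ∫ t in (0 : ℝ)..1, dot2 (A (γ₁ t)) (deriv γ₁ t) := lineIntegral_congr hH1

/-- Homotopy invariance of the circulation of a curl-free `C¹` vector field: if two `C¹`
closed curves in `U` are `C¹`-homotopic through closed curves in `U`, then they have the
same circulation `∮ A·dx`. -/
theorem circulation_homotopy_invariant
    (U : Set (ℝ × ℝ)) (hU : IsOpen U)
    (A : ℝ × ℝ → ℝ × ℝ) (hA : ContDiffOn ℝ 1 A U)
    (hcurl : ∀ x ∈ U, pdR1 (fun y => (A y).2) x = pdR2 (fun y => (A y).1) x)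
    (γ₀ γ₁ : ℝ → ℝ × ℝ) (hγ₀ : ContDiff ℝ 1 γ₀) (hγ₁ : ContDiff ℝ 1 γ₁)
    (hclosed₀ : γ₀ 0 = γ₀ 1) (hclosed₁ : γ₁ 0 = γ₁ 1)
    (H : ℝ → ℝ → ℝ × ℝ) (hH : ContDiff ℝ 1 (fun p : ℝ × ℝ => H p.1 p.2))
    (hH0 : ∀ t ∈ Set.Icc (0 : ℝ) 1, H 0 t = γ₀ t)
    (hH1 : ∀ t ∈ Set.Icc (0 : ℝ) 1, H 1 t = γ₁ t)
    (hHclosed : ∀ s ∈ Set.Icc (0 : ℝ) 1, H s 0 = H s 1)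
    (hHU : ∀ s ∈ Set.Icc (0 : ℝ) 1, ∀ t ∈ Set.Icc (0 : ℝ) 1, H s t ∈ U) :
    (∫ t in (0 : ℝ)..1, dot2 (A (γ₀ t)) (deriv γ₀ t))
      = ∫ t in (0 : ℝ)..1, dot2 (A (γ₁ t)) (deriv γ₁ t) :=
  circulation_homotopy_invariant_general U hU A hA hcurl γ₀ γ₁ H hH hH0 hH1 hHclosed hHU
end
end

section
/- Let w : ℝ → ℂ be twice continuously differentiable with compact support, and for t > 0 set u(t) = (e^{−iπ/4}√m /√(2πħt)) ∫_ℝ exp(i m s²/(2ħt)) w(s) ds. Then u is differentiable on (0,∞) and −iħ u'(t) = (e^{−iπ/4}√m /√(2πħt)) ∫_ℝ exp(i m s²/(2ħt)) · (ħ²/(2m)) w''(s) ds for all t > 0. (This is the key identity behind the Kannai transmutation formula: applying −iħ∂ₜ under the integral is the same as applying (ħ²/(2m))∂²ₛ to w.) -/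
/-!
Write `K(t, s) = exp (i m s² / (2ħt))`. A direct computation gives
`(ħ²/2m) ∂ₛ²K = (iħ/2t) K - iħ ∂ₜK`. Since `w` has compact support we may differentiate
`∫ K(t, s) w(s) ds` under the integral sign and integrate by parts twice in `s`, so
`(ħ²/2m) ∫ K w'' = (iħ/2t) ∫ K w - iħ ∂ₜ ∫ K w`. The term `(iħ/2t) ∫ K w` is exactly what
`-iħ` times the derivative of the prefactor `t^{-1/2}` contributes.
-/

open Real Set MeasureTheory

noncomputable section

section Calculus

variable {A : Type*} [NormedRing A] [NormedAlgebra ℝ A]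

theorem integral_mul_deriv_deriv_eq_of_hasCompactSupport {φ φ' φ'' w : ℝ → A}
    (hφ : ∀ x, HasDerivAt φ (φ' x) x) (hφ' : ∀ x, HasDerivAt φ' (φ'' x) x)
    (hφ'' : Continuous φ'') (hw : ContDiff ℝ 2 w) (hws : HasCompactSupport w) :
    ∫ x, φ x * deriv (deriv w) x = ∫ x, φ'' x * w x := by
  have hw' : ContDiff ℝ 1 (deriv w) := hw.deriv' (n := 1)
  have integrable {f g : ℝ → A} (hf : Continuous f) (hg : Continuous g)
      (hgs : HasCompactSupport g) : Integrable (f * g) :=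
    (hf.mul hg).integrable_of_hasCompactSupport hgs.mul_left
  have hφc : Continuous φ := continuous_iff_continuousAt.2 fun x => (hφ x).continuousAt
  have hφ'c : Continuous φ' := continuous_iff_continuousAt.2 fun x => (hφ' x).continuousAt
  have hw'c : Continuous (deriv w) := hw'.continuous
  have hws' : HasCompactSupport (deriv w) := hws.deriv
  calc ∫ x, φ x * deriv (deriv w) x = -∫ x, φ' x * deriv w x :=
        integral_mul_deriv_eq_deriv_mul_of_integrable (fun x _ => hφ x)
          (fun x _ => (hw'.differentiable one_ne_zero x).hasDerivAt)
          (integrable hφc (hw'.continuous_deriv le_rfl) hws'.deriv) (integrable hφ'c hw'c hws')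
          (integrable hφc hw'c hws')
    _ = ∫ x, φ'' x * w x := by
      rw [integral_mul_deriv_eq_deriv_mul_of_integrable (fun x _ => hφ' x)
          (fun x _ => (hw.differentiable two_ne_zero x).hasDerivAt)
          (integrable hφ'c hw'c hws') (integrable hφ'' hw.continuous hws)
          (integrable hφ'c hw.continuous hws), neg_neg]

theorem hasDerivAt_integral_mul_of_hasCompactSupport {K K' : ℝ → ℝ → A} {w : ℝ → A} {t r : ℝ}
    (hr : 0 < r) (hK : ∀ τ ∈ Metric.ball t r, Continuous (K τ))
    (hK' : ContinuousOn (Function.uncurry K') (Metric.closedBall t r ×ˢ univ))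
    (hderiv : ∀ τ ∈ Metric.ball t r, ∀ s, HasDerivAt (K · s) (K' τ s) τ)
    (hw : Continuous w) (hws : HasCompactSupport w) :
    HasDerivAt (fun τ => ∫ s, K τ s * w s) (∫ s, K' t s * w s) t := by
  obtain ⟨C, hC⟩ := ((isCompact_closedBall t r).prod hws.isCompact).exists_bound_of_continuousOn
    (hK'.mono (prod_mono le_rfl (subset_univ _)))
  have hbound : ∀ τ ∈ Metric.ball t r, ∀ s, ‖K' τ s * w s‖ ≤ C * ‖w s‖ := by
    intro τ hτ s
    by_cases hs : s ∈ tsupport w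
    · exact (norm_mul_le _ _).trans (mul_le_mul_of_nonneg_right
        (hC (τ, s) ⟨Metric.ball_subset_closedBall hτ, hs⟩) (norm_nonneg _))
    · simp [image_eq_zero_of_notMem_tsupport hs]
  have hK't : Continuous (K' t) := hK'.comp_continuous (continuous_const.prodMk continuous_id)
    fun _ => ⟨Metric.mem_closedBall_self hr.le, mem_univ _⟩
  exact (hasDerivAt_integral_of_dominated_loc_of_deriv_le (Metric.ball_mem_nhds t hr)
    (Filter.eventually_of_mem (Metric.ball_mem_nhds t hr) fun τ hτ =>
      ((hK τ hτ).mul hw).aestronglyMeasurable)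
    (((hK t (Metric.mem_ball_self hr)).mul hw).integrable_of_hasCompactSupport hws.mul_left)
    ((hK't.mul hw).aestronglyMeasurable)
    (Filter.Eventually.of_forall fun s τ hτ => hbound τ hτ s)
    ((hw.norm.integrable_of_hasCompactSupport hws.norm).const_mul C)
    (Filter.Eventually.of_forall fun s τ hτ => (hderiv τ hτ s).mul_const (w s))).2

end Calculus

theorem hasDerivAt_div_sqrt_mul {κ t : ℝ} (A : ℂ) (hκt : 0 < κ * t) :
    HasDerivAt (fun τ : ℝ => A / (√(κ * τ) : ℂ)) (-(A / √(κ * t)) / (2 * t)) t := by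
  have ht : (t : ℂ) ≠ 0 := by
    exact_mod_cast (show t ≠ 0 by rintro rfl; simp at hκt)
  have hs : ((√(κ * t) : ℝ) : ℂ) ≠ 0 := by exact_mod_cast (Real.sqrt_pos.2 hκt).ne'
  have hsq : ((√(κ * t) : ℝ) : ℂ) ^ 2 = κ * t := by exact_mod_cast Real.sq_sqrt hκt.le
  have hroot := (((hasDerivAt_id t).const_mul κ).sqrt hκt.ne').ofReal_comp
  refine ((hasDerivAt_const t A).div hroot hs).congr_deriv ?_
  simp only [id, mul_one]
  push_cast
  field_simp
  linear_combination A * hsq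

def kannaiKernel (hbar m t s : ℝ) : ℂ :=
  Complex.exp (Complex.I * m * s ^ 2 / (2 * hbar * t))

namespace kannaiKernel

open Complex

variable {hbar m : ℝ}

theorem hasDerivAt_space (t s : ℝ) :
    HasDerivAt (kannaiKernel hbar m t) (I * m * s / (hbar * t) * kannaiKernel hbar m t s) s := by
  have h := (((hasDerivAt_pow 2 (s : ℂ)).const_mul (I * m)).div_const (2 * hbar * t)).cexp
  refine h.comp_ofReal.congr_deriv ?_
  simp only [kannaiKernel]
  ring

theorem hasDerivAt_space_deriv (t s : ℝ) :
    HasDerivAt (fun s : ℝ => I * m * s / (hbar * t) * kannaiKernel hbar m t s)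
      ((I * m / (hbar * t) + (I * m * s / (hbar * t)) ^ 2) * kannaiKernel hbar m t s) s := by
  have h := (((hasDerivAt_id (s : ℂ)).const_mul (I * m)).div_const (hbar * t)).comp_ofReal
  refine (h.mul (hasDerivAt_space t s)).congr_deriv ?_
  simp only [id]
  ring

theorem hasDerivAt_time {t : ℝ} (ht : t ≠ 0) (s : ℝ) :
    HasDerivAt (kannaiKernel hbar m · s)
      (-(I * m * s ^ 2 / (2 * hbar * t ^ 2)) * kannaiKernel hbar m t s) t := by
  have h := (((hasDerivAt_inv (ofReal_ne_zero.2 ht)).const_mul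
    (I * m * s ^ 2 / (2 * hbar))).cexp).comp_ofReal
  have hK : (kannaiKernel hbar m · s) =
      fun τ : ℝ => cexp (I * m * s ^ 2 / (2 * hbar) * (τ : ℂ)⁻¹) := by
    ext τ
    simp only [kannaiKernel]
    ring_nf
  rw [hK]
  refine h.congr_deriv ?_
  rw [congrFun hK t]
  ring

theorem schrodinger {t : ℝ} (hbar0 : hbar ≠ 0) (hm : m ≠ 0) (ht : t ≠ 0) (s : ℝ) :
    (hbar ^ 2 / (2 * m) : ℂ) * ((I * m / (hbar * t) + (I * m * s / (hbar * t)) ^ 2) *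
      kannaiKernel hbar m t s) =
    I * hbar / (2 * t) * kannaiKernel hbar m t s
      - I * hbar * (-(I * m * s ^ 2 / (2 * hbar * t ^ 2)) * kannaiKernel hbar m t s) := by
  have : (hbar : ℂ) ≠ 0 := by exact_mod_cast hbar0
  have : (m : ℂ) ≠ 0 := by exact_mod_cast hm
  have : (t : ℂ) ≠ 0 := by exact_mod_cast ht
  field_simp
  ring

theorem continuous_space (t : ℝ) : Continuous (kannaiKernel hbar m t) :=
  continuous_iff_continuousAt.2 fun s => (hasDerivAt_space t s).continuousAt

theorem continuousOn_timeDeriv (hbar0 : hbar ≠ 0) :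
    ContinuousOn (Function.uncurry fun τ s : ℝ =>
      -(I * m * s ^ 2 / (2 * hbar * τ ^ 2)) * kannaiKernel hbar m τ s) ({0}ᶜ ×ˢ univ) := by
  intro p hp
  have hp0 : (p.1 : ℂ) ≠ 0 := by simpa using hp.1
  apply ContinuousAt.continuousWithinAt
  simp only [kannaiKernel]
  fun_prop (disch := simp [hp0, hbar0])

theorem integral_mul_deriv_deriv {w : ℝ → ℂ} {t : ℝ} (hbar0 : hbar ≠ 0) (hm : m ≠ 0)
    (ht : t ≠ 0) (hw : ContDiff ℝ 2 w) (hws : HasCompactSupport w) :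
    ∫ s, kannaiKernel hbar m t s * ((hbar ^ 2 / (2 * m) : ℂ) * deriv (deriv w) s) =
      I * hbar / (2 * t) * (∫ s, kannaiKernel hbar m t s * w s)
        - I * hbar * ∫ s, -(I * m * s ^ 2 / (2 * hbar * t ^ 2)) * kannaiKernel hbar m t s * w s := by
  have integrable {f : ℝ → ℂ} (hf : Continuous f) : Integrable fun s => f s * w s :=
    (hf.mul hw.continuous).integrable_of_hasCompactSupport hws.mul_left
  have hK := continuous_space (hbar := hbar) (m := m) t
  calc ∫ s, kannaiKernel hbar m t s * ((hbar ^ 2 / (2 * m) : ℂ) * deriv (deriv w) s)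
      = (hbar ^ 2 / (2 * m) : ℂ) * ∫ s, kannaiKernel hbar m t s * deriv (deriv w) s := by
        simp_rw [mul_left_comm _ (hbar ^ 2 / (2 * m) : ℂ)]
        exact integral_const_mul _ _
    _ = ∫ s, (hbar ^ 2 / (2 * m) : ℂ) *
          ((I * m / (hbar * t) + (I * m * s / (hbar * t)) ^ 2) * kannaiKernel hbar m t s) * w s := by
        rw [integral_mul_deriv_deriv_eq_of_hasCompactSupport (hasDerivAt_space t)
          (hasDerivAt_space_deriv t) (by fun_prop) hw hws, ← integral_const_mul]
        simp_rw [mul_assoc]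
    _ = ∫ s, (I * hbar / (2 * t) * (kannaiKernel hbar m t s * w s)
          - I * hbar * (-(I * m * s ^ 2 / (2 * hbar * t ^ 2)) * kannaiKernel hbar m t s * w s)) := by
        congr 1 with s
        rw [schrodinger hbar0 hm ht s]
        ring
    _ = _ := by
        rw [integral_sub ((integrable hK).const_mul _) ((integrable (by fun_prop)).const_mul _),
          integral_const_mul, integral_const_mul]

end kannaiKernel

/-- The Kannai transmutation identity: for `w : ℝ → ℂ` twice continuously differentiable
with compact support and
`u(t) = (e^{-iπ/4}√m/√(2πħt)) ∫_ℝ exp(i m s²/(2ħt)) w(s) ds` for `t > 0`,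
the function `u` is differentiable on `(0,∞)` and
`-iħ u'(t) = (e^{-iπ/4}√m/√(2πħt)) ∫_ℝ exp(i m s²/(2ħt)) (ħ²/(2m)) w''(s) ds`. -/
theorem kannai_time_derivative
    (hbar m : ℝ) (hhbar : 0 < hbar) (hm : 0 < m)
    (w : ℝ → ℂ) (hw : ContDiff ℝ 2 w) (hwsupp : HasCompactSupport w)
    (u : ℝ → ℂ)
    (hu : ∀ t : ℝ, 0 < t →
      u t = (Complex.exp (-(Complex.I * Real.pi / 4)) * (Real.sqrt m : ℂ) /
              (Real.sqrt (2 * Real.pi * hbar * t) : ℂ)) *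
            ∫ s : ℝ, Complex.exp (Complex.I * m * s ^ 2 / (2 * hbar * t)) * w s) :
    ∀ t : ℝ, 0 < t → ∃ d : ℂ, HasDerivAt u d t ∧
      (-(Complex.I) * (hbar : ℂ)) * d =
        (Complex.exp (-(Complex.I * Real.pi / 4)) * (Real.sqrt m : ℂ) /
          (Real.sqrt (2 * Real.pi * hbar * t) : ℂ)) *
        ∫ s : ℝ, Complex.exp (Complex.I * m * s ^ 2 / (2 * hbar * t)) *
          (((hbar : ℂ) ^ 2 / (2 * m)) * deriv (deriv w) s) := by
  intro t ht
  have hkernel : ∀ τ s : ℝ, Complex.exp (Complex.I * m * s ^ 2 / (2 * hbar * τ)) =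
      kannaiKernel hbar m τ s := fun _ _ => rfl
  simp only [hkernel] at hu ⊢
  have hprefactor := hasDerivAt_div_sqrt_mul
    (Complex.exp (-(Complex.I * Real.pi / 4)) * (Real.sqrt m : ℂ)) (κ := 2 * Real.pi * hbar)
    (t := t) (by positivity)
  have hball : ∀ τ ∈ Metric.closedBall t (t / 2), τ ≠ 0 := fun τ hτ => by
    rw [Metric.mem_closedBall, Real.dist_eq, abs_le] at hτ
    linarith
  have hintegral : HasDerivAt (fun τ => ∫ s, kannaiKernel hbar m τ s * w s)
      (∫ s, -(Complex.I * m * s ^ 2 / (2 * hbar * t ^ 2)) * kannaiKernel hbar m t s * w s) t :=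
    hasDerivAt_integral_mul_of_hasCompactSupport (half_pos ht)
      (fun τ _ => kannaiKernel.continuous_space τ)
      ((kannaiKernel.continuousOn_timeDeriv hhbar.ne').mono (prod_mono hball subset_rfl))
      (fun τ hτ s => kannaiKernel.hasDerivAt_time (hball τ (Metric.ball_subset_closedBall hτ)) s)
      hw.continuous hwsupp
  refine ⟨_, (hprefactor.mul hintegral).congr_of_eventuallyEq
    (Filter.eventually_of_mem (Ioi_mem_nhds ht) hu), ?_⟩
  rw [kannaiKernel.integral_mul_deriv_deriv hhbar.ne' hm.ne' ht.ne' hw hwsupp]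
  ring

end
end

section
/- Let f : ℝ → ℂ be a Schwartz function. Then lim_{t → 0⁺} (e^{−iπ/4}√m /√(2πħt)) ∫_ℝ exp(i m s²/(2ħt)) f(s) ds = f(0). In particular, the function u defined by the Kannai formula from initial data w(x, ·) attains the correct initial value u(x,0) = w(x,0). -/
open Real Set MeasureTheory Filter

noncomputable section

/-!
Write `f = 𝓕 h` with `h = 𝓕⁻ f`. For `Re b > 0` the multiplication formula
`∫ 𝓕 u · h = ∫ u · 𝓕 h`, applied to the Gaussian `u x = exp (-π b x²)`, gives
`∫ exp (-π b s²) f s ds = b^(-1/2) ∫ exp (-π ξ² / b) h ξ dξ`, and dominated convergence carries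
this identity to the boundary `Re b = 0`, in particular to the Fresnel parameter `b = -i c`.
Since `e^(-iπ/4) √c = (-i c)^(1/2)`, the Kannai expression at `c = m / (2πħt)` equals
`∫ exp (-iπ ξ² / c) h ξ dξ`, which tends to `∫ h = f 0` as `c → ∞`.
-/

open Complex FourierTransform Topology

theorem integral_fourier_mul_eq_integral_mul_fourier {V : Type*} [NormedAddCommGroup V]
    [InnerProductSpace ℝ V] [FiniteDimensional ℝ V] [MeasurableSpace V] [BorelSpace V]
    {f g : V → ℂ} (hf : Integrable f) (hg : Integrable g) :
    ∫ ξ, 𝓕 f ξ * g ξ = ∫ x, f x * 𝓕 g x := by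
  have := VectorFourier.integral_fourierIntegral_smul_eq_flip (L := innerₗ V)
    Real.continuous_fourierChar continuous_inner hf hg
  simp only [flip_innerₗ, smul_eq_mul] at this
  exact this

theorem tendsto_integral_mul_of_norm_le_one {ι α : Type*} [MeasurableSpace α] {μ : Measure α}
    {l : Filter ι} [l.IsCountablyGenerated] {k : ι → α → ℂ} {k₀ g : α → ℂ}
    (hg : Integrable g μ) (hk_meas : ∀ᶠ i in l, AEStronglyMeasurable (k i) μ)
    (hk_le : ∀ᶠ i in l, ∀ x, ‖k i x‖ ≤ 1) (hk_lim : ∀ x, Tendsto (k · x) l (𝓝 (k₀ x))) :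
    Tendsto (fun i => ∫ x, k i x * g x ∂μ) l (𝓝 (∫ x, k₀ x * g x ∂μ)) := by
  refine tendsto_integral_filter_of_dominated_convergence (fun x => ‖g x‖)
    (hk_meas.mono fun i hi => hi.mul hg.aestronglyMeasurable) ?_ hg.norm
    (ae_of_all _ fun x => (hk_lim x).mul_const (g x))
  filter_upwards [hk_le] with i hi
  refine ae_of_all _ fun x => ?_
  rw [norm_mul]
  exact mul_le_of_le_one_left (norm_nonneg _) (hi x)

theorem norm_cexp_neg_pi_mul_sq_le_one {b : ℂ} (hb : 0 ≤ b.re) (x : ℝ) :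
    ‖cexp (-π * b * x ^ 2)‖ ≤ 1 := by
  rw [norm_exp, Real.exp_le_one_iff, ← ofReal_pow, re_mul_ofReal, neg_mul, neg_re,
    re_ofReal_mul, neg_mul, neg_nonpos]
  positivity

theorem norm_cexp_neg_pi_div_mul_sq_le_one {b : ℂ} (hb : 0 ≤ b.re) (x : ℝ) :
    ‖cexp (-π / b * x ^ 2)‖ ≤ 1 := by
  have hb' : 0 ≤ b⁻¹.re := by
    rw [inv_re]
    exact div_nonneg hb (normSq_nonneg b)
  simpa only [div_eq_mul_inv] using norm_cexp_neg_pi_mul_sq_le_one hb' x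

theorem integral_cexp_neg_pi_mul_sq_mul_fourier_of_re_pos {b : ℂ} (hb : 0 < b.re)
    {h : ℝ → ℂ} (hh : Integrable h) :
    ∫ s : ℝ, cexp (-π * b * s ^ 2) * 𝓕 h s =
      1 / b ^ (1 / 2 : ℂ) * ∫ ξ : ℝ, cexp (-π / b * ξ ^ 2) * h ξ := by
  have hgauss : Integrable fun x : ℝ => cexp (-(π * b) * x ^ 2) :=
    integrable_cexp_neg_mul_sq (by simpa using mul_pos pi_pos hb)
  simp only [← neg_mul] at hgauss
  rw [← integral_fourier_mul_eq_integral_mul_fourier hgauss hh, fourier_gaussian_pi hb]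
  simp_rw [mul_assoc, integral_const_mul]

theorem integral_cexp_neg_pi_mul_sq_mul_fourier {b : ℂ} (hb : 0 ≤ b.re) (hb₀ : b ≠ 0)
    {h : ℝ → ℂ} (hh : Integrable h) (hFh : Integrable (𝓕 h)) :
    ∫ s : ℝ, cexp (-π * b * s ^ 2) * 𝓕 h s =
      1 / b ^ (1 / 2 : ℂ) * ∫ ξ : ℝ, cexp (-π / b * ξ ^ 2) * h ξ := by
  have hbε : Tendsto (fun ε : ℝ => b + ε) (𝓝[>] 0) (𝓝 b) := by
    exact (Continuous.tendsto' (by fun_prop) 0 b (by simp)).mono_left nhdsWithin_le_nhds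
  have hre : ∀ᶠ ε : ℝ in 𝓝[>] 0, 0 < (b + ε).re := by
    filter_upwards [self_mem_nhdsWithin] with ε (hε : 0 < ε)
    simpa using add_pos_of_nonneg_of_pos hb hε
  have hslit : b ∈ slitPlane := by
    rw [mem_slitPlane_iff]
    rcases hb.lt_or_eq with hb | hb
    · exact Or.inl hb
    · exact Or.inr fun him => hb₀ (Complex.ext hb.symm him)
  refine tendsto_nhds_unique (f := fun ε : ℝ => ∫ s : ℝ, cexp (-π * (b + ε) * s ^ 2) * 𝓕 h s)
    (l := 𝓝[>] 0) ?_ ?_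
  · refine tendsto_integral_mul_of_norm_le_one hFh (Eventually.of_forall fun ε => by fun_prop)
      (hre.mono fun ε hε => norm_cexp_neg_pi_mul_sq_le_one hε.le) fun s => ?_
    exact ((tendsto_const_nhds.mul hbε).mul_const _).cexp
  · refine Tendsto.congr' (hre.mono fun ε hε =>
      (integral_cexp_neg_pi_mul_sq_mul_fourier_of_re_pos hε hh).symm) ?_
    refine (tendsto_const_nhds.div ((continuousAt_cpow_const hslit).tendsto.comp hbε)
      (by simp [cpow_eq_zero_iff, hb₀])).mul ?_
    refine tendsto_integral_mul_of_norm_le_one hh (Eventually.of_forall fun ε => by fun_prop)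
      (hre.mono fun ε hε => norm_cexp_neg_pi_div_mul_sq_le_one hε.le) fun ξ => ?_
    exact ((tendsto_const_nhds.div hbε hb₀).mul_const _).cexp

theorem neg_I_mul_ofReal_cpow_half {c : ℝ} (hc : 0 < c) :
    (-I * c) ^ (1 / 2 : ℂ) = √c * cexp (-(I * π / 4)) := by
  rw [cpow_def_of_ne_zero (by simp [hc.ne']), mul_comm (-I), log_ofReal_mul hc (by simp),
    log_neg_I, add_mul, Complex.exp_add, Real.sqrt_eq_rpow, Real.rpow_def_of_pos hc, ofReal_exp]
  push_cast
  ring_nf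

def fresnelKernel (c s : ℝ) : ℂ :=
  cexp (-(I * π / 4)) * √c * cexp (π * I * c * s ^ 2)

theorem tendsto_integral_fresnelKernel_mul {f : ℝ → ℂ} (hf : Continuous f) (hfi : Integrable f)
    (hFf : Integrable (𝓕 f)) :
    Tendsto (fun c => ∫ s, fresnelKernel c s * f s) atTop (𝓝 (f 0)) := by
  set h := 𝓕⁻ f
  have hFh : 𝓕 h = f := hf.fourier_fourierInv_eq hfi hFf
  have hh : Integrable h := by
    simpa only [h, funext (fourierInv_eq_fourier_neg f)] using hFf.comp_neg
  have hf0 : f 0 = ∫ ξ, h ξ := by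
    rw [← hFh, Real.fourier_eq]
    simp
  have hkernel : ∀ c : ℝ, 0 < c →
      ∫ s, fresnelKernel c s * f s = ∫ ξ : ℝ, cexp (-π / (-I * c) * ξ ^ 2) * h ξ := by
    intro c hc
    have hb : 0 ≤ (-I * c).re := by simp
    have hb₀ : -I * c ≠ 0 := by simp [hc.ne']
    calc ∫ s, fresnelKernel c s * f s
        = (-I * c) ^ (1 / 2 : ℂ) * ∫ s : ℝ, cexp (-π * (-I * c) * s ^ 2) * 𝓕 h s := by
          rw [hFh, neg_I_mul_ofReal_cpow_half hc, ← integral_const_mul]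
          congr 1 with s
          simp only [fresnelKernel]
          ring_nf
      _ = ∫ ξ : ℝ, cexp (-π / (-I * c) * ξ ^ 2) * h ξ := by
          rw [integral_cexp_neg_pi_mul_sq_mul_fourier hb hb₀ hh (by rwa [hFh]), ← mul_assoc,
            mul_one_div_cancel (by simp [cpow_eq_zero_iff, hc.ne']), one_mul]
  have hdecay : Tendsto (fun c : ℝ => -π / (-I * c)) atTop (𝓝 0) := by
    have hinv : Tendsto (fun c : ℝ => (c : ℂ)⁻¹) atTop (𝓝 0) := by
      simpa [Function.comp_def] using (continuous_ofReal.tendsto 0).comp tendsto_inv_atTop_zero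
    have heq : (fun c : ℝ => -π / (-I * c)) = fun c : ℝ => -π * I * (c : ℂ)⁻¹ := by
      funext c
      rw [div_eq_mul_inv, mul_inv, inv_neg, inv_I]
      ring
    rw [heq, ← mul_zero (-π * I : ℂ)]
    exact hinv.const_mul _
  rw [hf0]
  refine Tendsto.congr' (eventually_gt_atTop 0 |>.mono fun c hc => (hkernel c hc).symm) ?_
  have hlim : ∀ ξ : ℝ, Tendsto (fun c : ℝ => cexp (-π / (-I * c) * ξ ^ 2)) atTop (𝓝 1) := by
    intro ξ
    simpa using (hdecay.mul_const ((ξ : ℂ) ^ 2)).cexp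
  have := tendsto_integral_mul_of_norm_le_one
    (k := fun (c ξ : ℝ) => cexp (-π / (-I * c) * ξ ^ 2)) (k₀ := fun _ => 1) hh
    (Eventually.of_forall fun c => by fun_prop)
    (Eventually.of_forall fun c => norm_cexp_neg_pi_div_mul_sq_le_one (by simp)) hlim
  simpa only [one_mul] using this

/-- Approximate-identity property of the Fresnel kernel in the Kannai formula:
for a Schwartz function `f`,
`lim_{t→0⁺} (e^{-iπ/4}√m/√(2πħt)) ∫_ℝ exp(i m s²/(2ħt)) f(s) ds = f(0)`. -/
theorem kannai_initial_value
    (hbar m : ℝ) (hhbar : 0 < hbar) (hm : 0 < m)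
    (f : SchwartzMap ℝ ℂ) :
    Tendsto
      (fun t : ℝ =>
        (Complex.exp (-(Complex.I * Real.pi / 4)) * (Real.sqrt m : ℂ) /
          (Real.sqrt (2 * Real.pi * hbar * t) : ℂ)) *
        ∫ s : ℝ, Complex.exp (Complex.I * m * s ^ 2 / (2 * hbar * t)) * f s)
      (nhdsWithin 0 (Set.Ioi 0)) (nhds (f 0)) := by
  have hc : Tendsto (fun t : ℝ => m / (2 * π * hbar) * t⁻¹) (𝓝[>] 0) atTop :=
    tendsto_inv_nhdsGT_zero.const_mul_atTop (by positivity)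
  have hFf : Integrable (𝓕 ⇑f) := by
    simpa [SchwartzMap.fourier_coe] using (𝓕 f).integrable
  refine ((tendsto_integral_fresnelKernel_mul f.continuous f.integrable hFf).comp hc).congr' ?_
  filter_upwards [self_mem_nhdsWithin] with t (ht : 0 < t)
  simp only [Function.comp_def, fresnelKernel, ← integral_const_mul]
  have hscale : m / (2 * π * hbar) * t⁻¹ = m / (2 * π * hbar * t) := by field_simp
  congr 1 with s
  have hexp : (π * I * ↑(m / (2 * π * hbar * t)) * s ^ 2 : ℂ) =
      I * m * s ^ 2 / (2 * hbar * t) := by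
    push_cast
    field_simp
  rw [hscale, Real.sqrt_div hm.le, hexp]
  push_cast
  ring

end
end

section
/- Let a ∈ ℝ, a ≠ 0, let M ∈ ℕ, and let w : ℝ → ℂ be smooth such that for every r ≥ 0 there is a constant C_r with |w^{(r)}(s)| ≤ C_r(1 + |s|)^M for all s ∈ ℝ. Let χ₀ : ℝ → ℝ be smooth with compact support, χ₀(s) = 1 for |s| ≤ 1/2 and χ₀(s) = 0 for |s| ≥ 1. Then the regularized oscillatory integrals ∫_ℝ χ₀(εs) e^{ias²} w(s) ds converge to a limit in ℂ as ε → 0⁺. -/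
/-!
Split `χ₀(εs) = χ₀(s) χ₀(εs) + χ₀(εs) (1 - χ₀(s))`. For `ε < 1/2` the first term is just `χ₀(s)`,
so it contributes an `ε`-independent integral over a compact set. The second amplitude vanishes
near `0`, so one may integrate by parts with `e^{ias²} = (2ias)⁻¹ d/ds e^{ias²}`: each step divides
by `s` and differentiates, lowering by one the order of growth of all derivatives of the amplitude,
uniformly in `ε ∈ [0, 1]` because the derivatives of `χ₀(ε ·)` are bounded by those of `χ₀`.
After `M + 2` steps the integrands are `O(|s|⁻²)` uniformly in `ε`, and near each point they
agree with the `ε = 0` integrand once `ε` is small, so dominated convergence gives the limit.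
-/

open Real Set MeasureTheory Filter
open scoped ContDiff Topology Nat

namespace OscillatoryIntegral

variable {E : Type*} [NormedAddCommGroup E] [NormedSpace ℝ E] {ι : Type*}

def IsUniformSymbol (F : ι → ℝ → E) (k : ℤ) : Prop :=
  (∀ i s, 1 / 2 ≤ |s| → ContDiffAt ℝ ∞ (F i) s) ∧
    ∀ r : ℕ, ∃ C : ℝ, ∀ i s, 1 / 2 ≤ |s| → ‖iteratedDeriv r (F i) s‖ ≤ C * |s| ^ k

lemma norm_iteratedDeriv_inv (j : ℕ) (x : ℝ) :
    ‖iteratedDeriv j (fun t : ℝ => t⁻¹) x‖ = j ! * |x| ^ (-1 - j : ℤ) := by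
  rw [iteratedDeriv_eq_iterate, iter_deriv_inv]
  simp [norm_zpow]

lemma isUniformSymbol_inv : IsUniformSymbol (fun (_ : ι) (s : ℝ) => s⁻¹) (-1) := by
  refine ⟨fun _ s hs => contDiffAt_inv ℝ (abs_pos.mp (by linarith)), fun r => ⟨r ! * 2 ^ r, ?_⟩⟩
  intro _ s hs
  have hs0 : 0 < |s| := by linarith
  -- on `|s| ≥ 1/2` each extra factor `|s|⁻¹` costs at most `2`
  have hpow : |s| ^ (-1 - r : ℤ) ≤ 2 ^ r * |s| ^ (-1 : ℤ) := by
    rw [sub_eq_add_neg, zpow_add₀ hs0.ne', zpow_neg |s| (r : ℤ), zpow_natCast, ← inv_pow,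
      mul_comm]
    gcongr
    rw [inv_le_comm₀ hs0 two_pos]; linarith
  rw [norm_iteratedDeriv_inv, mul_assoc]
  gcongr

lemma IsUniformSymbol.smul {G : ι → ℝ → ℝ} {F : ι → ℝ → E} {k₁ k₂ : ℤ}
    (hG : IsUniformSymbol G k₁) (hF : IsUniformSymbol F k₂) :
    IsUniformSymbol (fun i s => G i s • F i s) (k₁ + k₂) := by
  refine ⟨fun i s hs => (hG.1 i s hs).smul (hF.1 i s hs), fun r => ?_⟩
  choose C hC using hG.2
  choose D hD using hF.2
  refine ⟨∑ j ∈ Finset.range (r + 1), r.choose j * C j * D (r - j), fun i s hs => ?_⟩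
  have hleibniz := iteratedDerivWithin_smul (mem_univ s) uniqueDiffOn_univ
    ((hG.1 i s hs).of_le (WithTop.coe_le_coe.mpr le_top)).contDiffWithinAt
    ((hF.1 i s hs).of_le (WithTop.coe_le_coe.mpr le_top)).contDiffWithinAt (n := r)
  simp only [iteratedDerivWithin_univ] at hleibniz
  change ‖iteratedDeriv r (G i • F i) s‖ ≤ _
  rw [hleibniz, Finset.sum_mul]
  refine (norm_sum_le _ _).trans (Finset.sum_le_sum fun j _ => ?_)
  rw [← Nat.cast_smul_eq_nsmul ℝ, norm_smul, norm_smul, RCLike.norm_natCast,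
    zpow_add₀ (by positivity), ← mul_assoc]
  have hGj := hC j i s hs
  calc (r.choose j : ℝ) * ‖iteratedDeriv j (G i) s‖ * ‖iteratedDeriv (r - j) (F i) s‖
      ≤ r.choose j * (C j * |s| ^ k₁) * (D (r - j) * |s| ^ k₂) := by
        gcongr
        · exact mul_nonneg (by positivity) ((norm_nonneg _).trans hGj)
        · exact hD (r - j) i s hs
    _ = _ := by ring

lemma IsUniformSymbol.deriv {F : ι → ℝ → E} {k : ℤ} (hF : IsUniformSymbol F k) :
    IsUniformSymbol (fun i => deriv (F i)) k :=
  ⟨fun i s hs => (hF.1 i s hs).derivWithin (by simp),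
    fun r => by simpa only [← iteratedDeriv_succ'] using hF.2 (r + 1)⟩

/-- Integrating by parts against `exp (i a s²)`, whose derivative is `2 i a s exp (i a s²)`,
trades the amplitude `f` for `-(2 i a)⁻¹ • derivInvSMul f`. -/
noncomputable def derivInvSMul (f : ℝ → E) : ℝ → E :=
  deriv fun s => s⁻¹ • f s

lemma IsUniformSymbol.iterate_derivInvSMul {F : ι → ℝ → E} {k : ℤ} (hF : IsUniformSymbol F k)
    (n : ℕ) : IsUniformSymbol (fun i => derivInvSMul^[n] (F i)) (k - n) := by
  induction n with
  | zero => simpa using hF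
  | succ n ih =>
    rw [Nat.cast_succ, ← sub_sub, ← neg_add_eq_sub (a := 1)]
    simp only [Function.iterate_succ_apply']
    exact (isUniformSymbol_inv.smul ih).deriv

def IsSmoothVanishingNearZero (f : ℝ → E) : Prop :=
  ContDiff ℝ ∞ f ∧ ∀ s, |s| < 1 / 2 → f s = 0

lemma IsSmoothVanishingNearZero.eventuallyEq_zero {f : ℝ → E} (hf : IsSmoothVanishingNearZero f)
    {s : ℝ} (hs : |s| < 1 / 2) : f =ᶠ[𝓝 s] 0 := by
  filter_upwards [(isOpen_lt continuous_abs continuous_const).mem_nhds hs] with t ht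
  exact hf.2 t ht

lemma IsSmoothVanishingNearZero.contDiff_inv_smul {f : ℝ → E}
    (hf : IsSmoothVanishingNearZero f) : ContDiff ℝ ∞ fun s => s⁻¹ • f s := by
  refine contDiff_iff_contDiffAt.mpr fun s => ?_
  rcases lt_or_ge |s| (1 / 2) with hs | hs
  · refine contDiffAt_const (c := (0 : E)).congr_of_eventuallyEq ?_
    filter_upwards [hf.eventuallyEq_zero hs] with t ht
    simp [ht]
  · exact (contDiffAt_inv ℝ (abs_pos.mp (by linarith))).smul hf.1.contDiffAt

lemma _root_.Filter.EventuallyEq.iterate_derivInvSMul {f g : ℝ → E} {s : ℝ} (h : f =ᶠ[𝓝 s] g)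
    (n : ℕ) : derivInvSMul^[n] f =ᶠ[𝓝 s] derivInvSMul^[n] g := by
  induction n with
  | zero => exact h
  | succ n ih =>
    simp only [Function.iterate_succ_apply']
    have h' : (fun t => t⁻¹ • derivInvSMul^[n] f t) =ᶠ[𝓝 s] fun t => t⁻¹ • derivInvSMul^[n] g t :=
      ih.mono fun t ht => congrArg (t⁻¹ • ·) ht
    exact h'.deriv

lemma IsSmoothVanishingNearZero.iterate_derivInvSMul {f : ℝ → E}
    (hf : IsSmoothVanishingNearZero f) (n : ℕ) :
    IsSmoothVanishingNearZero (derivInvSMul^[n] f) := by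
  induction n with
  | zero => exact hf
  | succ n ih =>
    rw [Function.iterate_succ_apply']
    refine ⟨(contDiff_infty_iff_deriv.mp ih.contDiff_inv_smul).2, fun s hs => ?_⟩
    have hzero : (fun t => t⁻¹ • derivInvSMul^[n] f t) =ᶠ[𝓝 s] fun _ => (0 : E) := by
      filter_upwards [ih.eventuallyEq_zero hs] with t ht
      simp [ht]
    rw [derivInvSMul, hzero.deriv_eq, deriv_const]

lemma _root_.HasCompactSupport.iterate_derivInvSMul {f : ℝ → E} (hf : HasCompactSupport f) (n : ℕ) :
    HasCompactSupport (derivInvSMul^[n] f) := by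
  induction n with
  | zero => exact hf
  | succ n ih =>
    rw [Function.iterate_succ_apply']
    exact (ih.smul_left (f := fun s : ℝ => s⁻¹)).deriv

lemma norm_cexp_I_mul_sq (a s : ℝ) : ‖Complex.exp (Complex.I * a * s ^ 2)‖ = 1 := by
  rw [show Complex.I * a * (s : ℂ) ^ 2 = ((a * s ^ 2 : ℝ) : ℂ) * Complex.I by push_cast; ring]
  exact Complex.norm_exp_ofReal_mul_I _

lemma hasDerivAt_cexp_I_mul_sq (a s : ℝ) :
    HasDerivAt (fun t : ℝ => Complex.exp (Complex.I * a * t ^ 2))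
      (2 * Complex.I * a * s * Complex.exp (Complex.I * a * s ^ 2)) s := by
  have hinner : HasDerivAt (fun t : ℝ => Complex.I * a * (t : ℂ) ^ 2)
      (Complex.I * a * (2 * s)) s := by
    simpa using ((hasDerivAt_pow 2 (s : ℂ)).const_mul (Complex.I * a)).comp_ofReal
  convert hinner.cexp using 1
  ring

theorem integral_mul_cexp_eq {a : ℝ} (ha : a ≠ 0) {f : ℝ → ℂ}
    (hf : IsSmoothVanishingNearZero f) (hfc : HasCompactSupport f) :
    ∫ s, f s * Complex.exp (Complex.I * a * s ^ 2) =
      -(2 * Complex.I * a)⁻¹ * ∫ s, derivInvSMul f s * Complex.exp (Complex.I * a * s ^ 2) := by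
  set e : ℝ → ℂ := fun s => Complex.exp (Complex.I * a * s ^ 2)
  set u : ℝ → ℂ := fun s => s⁻¹ • f s
  have hu : ContDiff ℝ ∞ u := hf.contDiff_inv_smul
  have huc : HasCompactSupport u := hfc.smul_left (f := fun s : ℝ => s⁻¹)
  have he : Continuous e := by fun_prop
  have huv' : u * (fun s => 2 * Complex.I * a * s * e s) =
      fun s => 2 * Complex.I * a * (f s * e s) := by
    ext s
    rcases eq_or_ne s 0 with rfl | hs
    · simp [u, hf.2 0 (by norm_num)]
    · have hs' : (s : ℂ) ≠ 0 := by exact_mod_cast hs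
      simp only [Pi.mul_apply, u, Complex.real_smul]
      push_cast
      field_simp
  have hibp := integral_mul_deriv_eq_deriv_mul_of_integrable
    (fun s _ => (hu.differentiable (by simp) s).hasDerivAt)
    (fun s _ => hasDerivAt_cexp_I_mul_sq a s)
    (huv' ▸ ((hf.1.continuous.mul he).integrable_of_hasCompactSupport hfc.mul_right).const_mul _)
    ((hu.continuous_deriv (by simp)).mul he |>.integrable_of_hasCompactSupport huc.deriv.mul_right)
    ((hu.continuous.mul he).integrable_of_hasCompactSupport huc.mul_right)
  rw [← Pi.mul_def, huv', integral_const_mul] at hibp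
  have hderiv : ∫ s, deriv u s * e s = -(2 * Complex.I * a * ∫ s, f s * e s) := by
    rw [hibp, neg_neg]
  have ha' : (a : ℂ) ≠ 0 := by exact_mod_cast ha
  change _ = _ * ∫ s, deriv u s * e s
  rw [hderiv]
  field_simp
  rfl

theorem integral_mul_cexp_eq_iterate {a : ℝ} (ha : a ≠ 0) {f : ℝ → ℂ}
    (hf : IsSmoothVanishingNearZero f) (hfc : HasCompactSupport f) (n : ℕ) :
    ∫ s, f s * Complex.exp (Complex.I * a * s ^ 2) =
      (-(2 * Complex.I * a)⁻¹) ^ n *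
        ∫ s, derivInvSMul^[n] f s * Complex.exp (Complex.I * a * s ^ 2) := by
  induction n with
  | zero => simp
  | succ n ih =>
    rw [ih, integral_mul_cexp_eq ha (hf.iterate_derivInvSMul n) (hfc.iterate_derivInvSMul n),
      Function.iterate_succ_apply']
    ring

lemma norm_le_inv_one_add_sq {G : Type*} [NormedAddCommGroup G] {x : G} {s C : ℝ}
    (hvanish : |s| < 1 / 2 → x = 0)
    (hdecay : 1 / 2 ≤ |s| → ‖x‖ ≤ C * |s| ^ (-2 : ℤ)) :
    ‖x‖ ≤ 5 * max C 0 * (1 + s ^ 2)⁻¹ := by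
  rcases lt_or_ge |s| (1 / 2) with hs | hs
  · rw [hvanish hs, norm_zero]
    positivity
  · have hs2 : 1 / 4 ≤ s ^ 2 := by nlinarith [sq_abs s]
    calc ‖x‖ ≤ C * |s| ^ (-2 : ℤ) := hdecay hs
      _ ≤ max C 0 * (s ^ 2)⁻¹ := by
        rw [zpow_neg, zpow_ofNat, sq_abs]
        gcongr
        exact le_max_left _ _
      _ ≤ max C 0 * (5 * (1 + s ^ 2)⁻¹) := by
        gcongr
        rw [inv_le_comm₀ (by positivity) (by positivity), mul_inv, inv_inv]
        linarith
      _ = 5 * max C 0 * (1 + s ^ 2)⁻¹ := by ring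

theorem tendsto_integral_of_vanishing_of_decay {α : Type*} {l : Filter α}
    [l.IsCountablyGenerated] {Φ : α → ℝ → E} {f : ℝ → E} {C : ℝ}
    (hmeas : ∀ᶠ ε in l, AEStronglyMeasurable (Φ ε))
    (hvanish : ∀ᶠ ε in l, ∀ s, |s| < 1 / 2 → Φ ε s = 0)
    (hdecay : ∀ᶠ ε in l, ∀ s, 1 / 2 ≤ |s| → ‖Φ ε s‖ ≤ C * |s| ^ (-2 : ℤ))
    (hlim : ∀ s, ∀ᶠ ε in l, Φ ε s = f s) :
    Tendsto (fun ε => ∫ s, Φ ε s) l (𝓝 (∫ s, f s)) :=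
  tendsto_integral_filter_of_dominated_convergence (fun s => 5 * max C 0 * (1 + s ^ 2)⁻¹) hmeas
    ((hvanish.and hdecay).mono fun _ h =>
      ae_of_all _ fun s => norm_le_inv_one_add_sq (h.1 s) (h.2 s))
    (integrable_inv_one_add_sq.const_mul _)
    (ae_of_all _ fun s => tendsto_nhds_of_eventually_eq (hlim s))

theorem tendsto_integral_iterate_derivInvSMul_mul_cexp (a : ℝ) {F : ℝ → ℝ → ℂ} {n : ℕ}
    (hF : ∀ ε, IsSmoothVanishingNearZero (F ε))
    (hsym : IsUniformSymbol (fun ε : Icc (0 : ℝ) 1 => F ε) (n - 2))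
    (hloc : ∀ s, ∀ᶠ ε in 𝓝[>] 0, F ε =ᶠ[𝓝 s] F 0) :
    Tendsto (fun ε => ∫ s, derivInvSMul^[n] (F ε) s * Complex.exp (Complex.I * a * s ^ 2))
      (𝓝[>] 0) (𝓝 (∫ s, derivInvSMul^[n] (F 0) s * Complex.exp (Complex.I * a * s ^ 2))) := by
  obtain ⟨C, hC⟩ := (hsym.iterate_derivInvSMul n).2 0
  refine tendsto_integral_of_vanishing_of_decay (C := C) (Eventually.of_forall fun ε => ?_)
    (Eventually.of_forall fun ε s hs => ?_) ?_ fun s => ?_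
  · exact (((hF ε).iterate_derivInvSMul n).1.continuous.mul (by fun_prop)).aestronglyMeasurable
  · rw [((hF ε).iterate_derivInvSMul n).2 s hs, zero_mul]
  · filter_upwards [Ioo_mem_nhdsGT one_pos] with ε hε s hs
    rw [norm_mul, norm_cexp_I_mul_sq, mul_one]
    simpa using hC ⟨ε, Ioo_subset_Icc_self hε⟩ s hs
  · filter_upwards [hloc s] with ε hε
    rw [(hε.iterate_derivInvSMul n).eq_of_nhds]

lemma exists_bound_iteratedDeriv {χ : ℝ → E} (hχ : ContDiff ℝ ∞ χ) (hχc : HasCompactSupport χ)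
    (r : ℕ) : ∃ B, ∀ x, ‖iteratedDeriv r χ x‖ ≤ B := by
  obtain ⟨B, hB⟩ := (hχc.iteratedFDeriv r).exists_bound_of_continuous
    (hχ.continuous_iteratedFDeriv (mod_cast le_top))
  exact ⟨B, fun x => by rw [← norm_iteratedFDeriv_eq_norm_iteratedDeriv]; exact hB x⟩

lemma isUniformSymbol_comp_mul {χ : ℝ → ℝ} (hχ : ContDiff ℝ ∞ χ) (hχc : HasCompactSupport χ) :
    IsUniformSymbol (fun ε : Icc (0 : ℝ) 1 => fun s => χ (ε * s)) 0 := by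
  refine ⟨fun ε s _ => (hχ.comp (contDiff_const.mul contDiff_id)).contDiffAt, fun r => ?_⟩
  obtain ⟨B, hB⟩ := exists_bound_iteratedDeriv hχ hχc r
  refine ⟨B, fun ε s _ => ?_⟩
  rw [iteratedDeriv_comp_const_mul (hχ.of_le (mod_cast le_top)), zpow_zero, mul_one, norm_mul,
    norm_pow, Real.norm_eq_abs, abs_of_nonneg ε.2.1]
  calc (ε : ℝ) ^ r * ‖iteratedDeriv r χ (ε * s)‖ ≤ 1 * B :=
        mul_le_mul (pow_le_one₀ ε.2.1 ε.2.2) (hB _) (norm_nonneg _) zero_le_one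
    _ = B := one_mul B

lemma isUniformSymbol_one_sub {χ : ℝ → ℝ} (hχ : ContDiff ℝ ∞ χ) (hχc : HasCompactSupport χ) :
    IsUniformSymbol (fun (_ : ι) s => 1 - χ s) 0 := by
  refine ⟨fun _ s _ => (contDiff_const.sub hχ).contDiffAt, fun r => ?_⟩
  obtain ⟨B, hB⟩ := exists_bound_iteratedDeriv hχ hχc r
  refine ⟨1 + B, fun _ s _ => ?_⟩
  rw [zpow_zero, mul_one]
  rcases r with _ | r
  · simp only [iteratedDeriv_zero] at hB ⊢
    exact (norm_sub_le _ _).trans (by simpa using hB s)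
  · rw [iteratedDeriv_const_sub r.succ_pos, iteratedDeriv_neg, norm_neg]
    linarith [hB s]

lemma isUniformSymbol_of_norm_iteratedDeriv_le {w : ℝ → E} (hw : ContDiff ℝ ∞ w) {M : ℕ}
    (hwbound : ∀ r : ℕ, ∃ C : ℝ, ∀ s : ℝ, ‖iteratedDeriv r w s‖ ≤ C * (1 + |s|) ^ M) :
    IsUniformSymbol (fun (_ : ι) => w) M := by
  refine ⟨fun _ s _ => hw.contDiffAt, fun r => ?_⟩
  obtain ⟨C, hC⟩ := hwbound r
  refine ⟨C * 3 ^ M, fun _ s hs => ?_⟩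
  have hC0 : 0 ≤ C := nonneg_of_mul_nonneg_left ((norm_nonneg _).trans (hC s)) (by positivity)
  calc ‖iteratedDeriv r w s‖ ≤ C * (1 + |s|) ^ M := hC s
    _ ≤ C * (3 * |s|) ^ M := by gcongr; linarith
    _ = C * 3 ^ M * |s| ^ (M : ℤ) := by rw [zpow_natCast, mul_pow, mul_assoc]

def cutoffTail (χ : ℝ → ℝ) (w : ℝ → E) (ε : ℝ) : ℝ → E :=
  fun s => χ (ε * s) • (1 - χ s) • w s

section cutoffTail

variable {χ : ℝ → ℝ} {w : ℝ → E}

lemma isSmoothVanishingNearZero_cutoffTail (hχ : ContDiff ℝ ∞ χ)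
    (hχ1 : ∀ s, |s| ≤ 1 / 2 → χ s = 1) (hw : ContDiff ℝ ∞ w) (ε : ℝ) :
    IsSmoothVanishingNearZero (cutoffTail χ w ε) :=
  ⟨(hχ.comp (contDiff_const.mul contDiff_id)).smul ((contDiff_const.sub hχ).smul hw),
    fun s hs => by simp [cutoffTail, hχ1 s hs.le]⟩

lemma hasCompactSupport_cutoffTail (hχc : HasCompactSupport χ) {ε : ℝ} (hε : ε ≠ 0) :
    HasCompactSupport (cutoffTail χ w ε) :=
  (hχc.comp_smul hε).smul_right

lemma isUniformSymbol_cutoffTail (hχ : ContDiff ℝ ∞ χ) (hχc : HasCompactSupport χ)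
    (hw : ContDiff ℝ ∞ w) {M : ℕ}
    (hwbound : ∀ r : ℕ, ∃ C : ℝ, ∀ s : ℝ, ‖iteratedDeriv r w s‖ ≤ C * (1 + |s|) ^ M) :
    IsUniformSymbol (fun ε : Icc (0 : ℝ) 1 => cutoffTail χ w ε) M := by
  have h := (isUniformSymbol_comp_mul hχ hχc).smul
    ((isUniformSymbol_one_sub hχ hχc).smul (isUniformSymbol_of_norm_iteratedDeriv_le hw hwbound))
  rwa [zero_add, zero_add] at h

lemma eventually_cutoffTail_eventuallyEq (hχ1 : ∀ s, |s| ≤ 1 / 2 → χ s = 1) (s : ℝ) :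
    ∀ᶠ ε in 𝓝[>] 0, cutoffTail χ w ε =ᶠ[𝓝 s] cutoffTail χ w 0 := by
  have hsmall : ∀ᶠ p : ℝ × ℝ in 𝓝 (0, s), |p.1 * p.2| < 1 / 2 :=
    ((continuous_fst.mul continuous_snd).abs.tendsto (0, s)).eventually_lt_const (by simp)
  filter_upwards [nhdsWithin_le_nhds hsmall.curry_nhds] with ε hε
  filter_upwards [hε] with t ht
  simp [cutoffTail, hχ1 _ ht.le, hχ1 0 (by norm_num)]

end cutoffTail

theorem integral_cutoff_eq_add_cutoffTail (a : ℝ) {χ : ℝ → ℝ} {w : ℝ → ℂ} (hχ : Continuous χ)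
    (hχc : HasCompactSupport χ) (hχ1 : ∀ s, |s| ≤ 1 / 2 → χ s = 1)
    (hχ0 : ∀ s, 1 ≤ |s| → χ s = 0) (hw : Continuous w) {ε : ℝ} (hε : ε ∈ Ioo 0 (1 / 2)) :
    ∫ s, (χ (ε * s) : ℂ) * Complex.exp (Complex.I * a * s ^ 2) * w s =
      (∫ s, (χ s : ℂ) * Complex.exp (Complex.I * a * s ^ 2) * w s) +
        ∫ s, cutoffTail χ w ε s * Complex.exp (Complex.I * a * s ^ 2) := by
  -- `χ (ε s) = 1` wherever `χ s ≠ 0`, since there `|ε s| < ε ≤ 1/2`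
  have hχχ : ∀ s, (χ s : ℂ) * χ (ε * s) = χ s := fun s => by
    rcases lt_or_ge |s| 1 with hs | hs
    · rw [hχ1 (ε * s) (by rw [abs_mul, abs_of_pos hε.1]; nlinarith [hε.2, abs_nonneg s]),
        Complex.ofReal_one, mul_one]
    · simp [hχ0 s hs]
  have hint₁ : Integrable fun s => (χ s : ℂ) * Complex.exp (Complex.I * a * s ^ 2) * w s := by
    refine Continuous.integrable_of_hasCompactSupport (by fun_prop) ?_
    exact ((hχc.comp_left Complex.ofReal_zero).mul_right (f' := fun s : ℝ =>
      Complex.exp (Complex.I * a * s ^ 2))).mul_right (f' := w)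
  have hint₂ : Integrable fun s => cutoffTail χ w ε s * Complex.exp (Complex.I * a * s ^ 2) := by
    refine Continuous.integrable_of_hasCompactSupport (by unfold cutoffTail; fun_prop) ?_
    exact (hasCompactSupport_cutoffTail (w := w) hχc hε.1.ne').mul_right
      (f' := fun s : ℝ => Complex.exp (Complex.I * a * s ^ 2))
  rw [← integral_add hint₁ hint₂]
  refine integral_congr_ae (ae_of_all _ fun s => ?_)
  simp only [cutoffTail, Complex.real_smul, Complex.ofReal_sub, Complex.ofReal_one]
  linear_combination (Complex.exp (Complex.I * a * s ^ 2) * w s) * hχχ s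

end OscillatoryIntegral

open OscillatoryIntegral

/-- Existence of the regularized oscillatory integral `∫_ℝ e^{ias²} w(s) ds` for a
smooth amplitude `w` with polynomially bounded derivatives: the cutoff integrals
`∫_ℝ χ₀(εs) e^{ias²} w(s) ds` converge as `ε → 0⁺`. -/
theorem oscillatory_integral_regularization_converges
    (a : ℝ) (ha : a ≠ 0) (M : ℕ)
    (w : ℝ → ℂ) (hw : ContDiff ℝ (⊤ : ℕ∞) w)
    (hwbound : ∀ r : ℕ, ∃ C : ℝ, ∀ s : ℝ, ‖iteratedDeriv r w s‖ ≤ C * (1 + |s|) ^ M)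
    (χ₀ : ℝ → ℝ) (hχsmooth : ContDiff ℝ (⊤ : ℕ∞) χ₀) (hχsupp : HasCompactSupport χ₀)
    (hχ1 : ∀ s : ℝ, |s| ≤ 1 / 2 → χ₀ s = 1) (hχ0 : ∀ s : ℝ, 1 ≤ |s| → χ₀ s = 0) :
    ∃ L : ℂ, Tendsto
      (fun ε : ℝ => ∫ s : ℝ, (χ₀ (ε * s) : ℂ) * Complex.exp (Complex.I * a * s ^ 2) * w s)
      (nhdsWithin 0 (Set.Ioi 0)) (nhds L) := by
  have hF := isSmoothVanishingNearZero_cutoffTail hχsmooth hχ1 hw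
  have hsym : IsUniformSymbol (fun ε : Icc (0 : ℝ) 1 => cutoffTail χ₀ w ε) ((M + 2 : ℕ) - 2) := by
    simpa using isUniformSymbol_cutoffTail hχsmooth hχsupp hw hwbound
  have hlim := (tendsto_integral_iterate_derivInvSMul_mul_cexp a hF hsym
    (eventually_cutoffTail_eventuallyEq hχ1)).const_mul ((-(2 * Complex.I * a)⁻¹) ^ (M + 2))
  refine ⟨_, ((tendsto_const_nhds (x := ∫ s, (χ₀ s : ℂ) *
    Complex.exp (Complex.I * a * s ^ 2) * w s)).add hlim).congr' ?_⟩
  filter_upwards [Ioo_mem_nhdsGT one_half_pos] with ε hε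
  rw [integral_cutoff_eq_add_cutoffTail a hχsmooth.continuous hχsupp hχ1 hχ0 hw.continuous hε,
    integral_mul_cexp_eq_iterate ha (hF ε) (hasCompactSupport_cutoffTail hχsupp hε.1.ne') (M + 2)]
end
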